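/- If A and B are summand-ideals of the pseudo MV-algebra M = Γ(G,u), then A ∩ B is a summand-ideal of M. -/

import Mathlib

variable {G : Type*} [Lattice G] [AddGroup G]
  [CovariantClass G G (· + ·) (· ≤ ·)]
  [CovariantClass G G (Function.swap (· + ·)) (· ≤ ·)]

/-- `u` is a strong unit of the lattice-ordered group `G`. -/
def IsStrongUnit (u : G) : Prop := 0 ≤ u ∧ ∀ x : G, ∃ n : ℕ, x ≤ n • u

/-- The operation `x ⊕ y := (x + y) ⊓ u` of the pseudo MV-algebra `Γ(G,u)`. -/
def oplus (u x y : G) : G := (x + y) ⊓ u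

/-- The operation `x ⊙ y := (x - u + y) ⊔ 0` of the pseudo MV-algebra `Γ(G,u)`. -/
def odot (u x y : G) : G := (x - u + y) ⊔ 0

/-- `n.x := x ⊕ ⋯ ⊕ x` (`n` summands), with `0.x = 0`. -/
def nOplus (u : G) : ℕ → G → G
  | 0, _ => 0
  | n + 1, x => oplus u (nOplus u n x) x

/-- `I` is an ideal of the pseudo MV-algebra with carrier `C ⊆ Γ(G,u)`:
a nonempty subset of `C`, downward closed within `C`, and closed under `⊕`. -/
def IsIdealIn (u : G) (C I : Set G) : Prop :=
  I ⊆ C ∧ I.Nonempty ∧ (∀ x ∈ I, ∀ y ∈ C, y ≤ x → y ∈ I) ∧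
    ∀ x ∈ I, ∀ y ∈ I, oplus u x y ∈ I

/-- `I` is a normal ideal: `x ⊕ I = I ⊕ x` for all `x ∈ C`. -/
def IsNormalIdealIn (u : G) (C I : Set G) : Prop :=
  IsIdealIn u C I ∧ ∀ x ∈ C, (fun i => oplus u x i) '' I = (fun i => oplus u i x) '' I

/-- `⟨X⟩_n`, the smallest normal ideal (of the carrier `C`) containing `X`. -/
def normalGenIn (u : G) (C X : Set G) : Set G :=
  ⋂₀ {I | IsNormalIdealIn u C I ∧ X ⊆ I}

/-- The polar `X^⊥ = {y ∈ C : y ∧ x = 0 for all x ∈ X}` computed in carrier `C`. -/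
def polarIn (C X : Set G) : Set G := {y ∈ C | ∀ x ∈ X, y ⊓ x = 0}

/-- `A ⊕ B := {a ⊕ b : a ∈ A, b ∈ B}`. -/
def setOplus (u : G) (A B : Set G) : Set G := Set.image2 (oplus u) A B

/-- `↓a` computed within the carrier `C`. -/
def dsetIn (C : Set G) (a : G) : Set G := {x ∈ C | x ≤ a}

/-- `I` is a summand-ideal of the carrier `C`: a normal ideal such that for
some normal ideal `J`, `I ∩ J = {0}` and `⟨I ∪ J⟩_n = C`. -/
def IsSummandIdealIn (u : G) (C I : Set G) : Prop :=
  IsNormalIdealIn u C I ∧ ∃ J, IsNormalIdealIn u C J ∧ I ∩ J = {0} ∧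
    normalGenIn u C (I ∪ J) = C

/-- `I` is a polar ideal of the carrier `C`: `I = I^⊥⊥`. -/
def IsPolarIdealIn (C I : Set G) : Prop := polarIn C (polarIn C I) = I

/-- `a` is a Boolean element of the carrier `C`: `a ∈ C` and `a ⊕ a = a`. -/
def IsBooleanIn (u : G) (C : Set G) (a : G) : Prop := a ∈ C ∧ oplus u a a = a

/-- The carrier `C` is strongly projectable: every polar ideal is a summand-ideal. -/
def IsStronglyProjectableIn (u : G) (C : Set G) : Prop :=
  ∀ I : Set G, IsPolarIdealIn C I → IsSummandIdealIn u C I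

/-- `N` is a subalgebra of `Γ(G,u)`: contains `0` and `u`, closed under `⊕`,
`x⁻ = u - x` and `x∼ = -x + u`. -/
def IsSubalg (u : G) (N : Set G) : Prop :=
  N ⊆ Set.Icc 0 u ∧ 0 ∈ N ∧ u ∈ N ∧
    (∀ x ∈ N, ∀ y ∈ N, oplus u x y ∈ N) ∧
    (∀ x ∈ N, u - x ∈ N) ∧ (∀ x ∈ N, -x + u ∈ N)

/-- `N` is a large subalgebra of `Γ(G,u)`: for every nonzero `y ∈ Γ(G,u)` there
are `n ∈ ℕ` and a nonzero `x ∈ N` with `x ≤ n.y`. -/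
def IsLargeSubalg (u : G) (N : Set G) : Prop :=
  IsSubalg u N ∧ ∀ y ∈ Set.Icc (0 : G) u, y ≠ 0 →
    ∃ n : ℕ, ∃ x ∈ N, x ≠ 0 ∧ x ≤ nOplus u n y


/-!
If `M = A ⊞ A' = B ⊞ B'`, then `A ∩ B` is complemented by `(A ∩ B') ⊕ A'`: write `x = a ⊕ a'` and
`a = b ⊕ b'`; since `b, b' ≤ a` lie in `A`, `x = b ⊕ (b' ⊕ a')` with `b ∈ A ∩ B` and `b' ∈ A ∩ B'`.
What makes this work is that for normal ideals `I`, `J` with `I ∩ J = {0}` the set `I ⊕ J` is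
already a normal ideal, hence equals `⟨I ∪ J⟩_n`: elements of `I` and `J` are disjoint, and
disjoint elements of an ℓ-group commute.
-/

set_option linter.unusedSectionVars false

variable {u : G}

lemma oplus_mem_Icc {x y : G} (hx : x ∈ Set.Icc 0 u) (hy : y ∈ Set.Icc 0 u) :
    oplus u x y ∈ Set.Icc 0 u :=
  ⟨le_inf (add_nonneg hx.1 hy.1) (hx.1.trans hx.2), inf_le_right⟩

lemma le_oplus_left {x y : G} (hx : x ≤ u) (hy : 0 ≤ y) : x ≤ oplus u x y :=
  le_inf (le_add_of_nonneg_right hy) hx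

lemma le_oplus_right {x y : G} (hx : 0 ≤ x) (hy : y ≤ u) : y ≤ oplus u x y :=
  le_inf (le_add_of_nonneg_left hx) hy

lemma oplus_zero {x : G} (hx : x ≤ u) : oplus u x 0 = x := by
  rw [oplus, add_zero, inf_eq_left.2 hx]

lemma zero_oplus {x : G} (hx : x ≤ u) : oplus u 0 x = x := by
  rw [oplus, zero_add, inf_eq_left.2 hx]

lemma oplus_assoc {x z : G} (y : G) (hx : 0 ≤ x) (hz : 0 ≤ z) :
    oplus u (oplus u x y) z = oplus u x (oplus u y z) := by
  have hu_add : (u + z) ⊓ u = u := inf_eq_right.2 (le_add_of_nonneg_right hz)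
  have add_hu : (x + u) ⊓ u = u := inf_eq_right.2 (le_add_of_nonneg_left hx)
  rw [oplus, oplus, oplus, oplus, inf_add, add_inf, inf_assoc, inf_assoc, hu_add, add_hu,
    add_assoc]

lemma inf_oplus (a b x : G) : oplus u (a ⊓ b) x = oplus u a x ⊓ oplus u b x := by
  rw [oplus, oplus, oplus, inf_add, inf_inf_distrib_right]

lemma oplus_inf (x a b : G) : oplus u x (a ⊓ b) = oplus u x a ⊓ oplus u x b := by
  rw [oplus, oplus, oplus, add_inf, inf_inf_distrib_right]

lemma add_eq_sup_of_inf_eq_zero {a b : G} (h : a ⊓ b = 0) : a + b = b ⊔ a := by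
  calc a + b = a + (-(a ⊓ b) + b) := by rw [h, neg_zero, zero_add]
    _ = b ⊔ a := by
      rw [neg_inf, sup_add, neg_add_cancel, add_sup, add_neg_cancel_left, add_zero]

lemma add_comm_of_inf_eq_zero {a b : G} (h : a ⊓ b = 0) : a + b = b + a := by
  rw [add_eq_sup_of_inf_eq_zero h, add_eq_sup_of_inf_eq_zero (inf_comm a b ▸ h), sup_comm]

lemma oplus_comm_of_inf_eq_zero {a b : G} (h : a ⊓ b = 0) : oplus u a b = oplus u b a := by
  rw [oplus, oplus, add_comm_of_inf_eq_zero h]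

lemma oplus_oplus_oplus_comm {a a' b b' : G} (ha : 0 ≤ a) (ha' : a' ∈ Set.Icc 0 u)
    (hb : b ∈ Set.Icc 0 u) (hb' : b' ∈ Set.Icc 0 u) (h : a' ⊓ b = 0) :
    oplus u (oplus u a a') (oplus u b b') = oplus u (oplus u a b) (oplus u a' b') :=
  calc oplus u (oplus u a a') (oplus u b b') = oplus u a (oplus u (oplus u a' b) b') := by
        rw [oplus_assoc a' ha (oplus_mem_Icc hb hb').1, oplus_assoc b ha'.1 hb'.1]
    _ = oplus u a (oplus u (oplus u b a') b') := by rw [oplus_comm_of_inf_eq_zero h]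
    _ = oplus u (oplus u a b) (oplus u a' b') := by
        rw [oplus_assoc a' hb.1 hb'.1, oplus_assoc b ha (oplus_mem_Icc ha' hb').1]

lemma setOplus_subset_Icc {I J : Set G} (hI : I ⊆ Set.Icc 0 u) (hJ : J ⊆ Set.Icc 0 u) :
    setOplus u I J ⊆ Set.Icc 0 u := by
  rintro _ ⟨a, ha, b, hb, rfl⟩
  exact oplus_mem_Icc (hI ha) (hJ hb)

namespace IsIdealIn

variable {I J : Set G}

lemma mem_of_le (hI : IsIdealIn u (Set.Icc 0 u) I) {x y : G} (hx : x ∈ I)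
    (hy : 0 ≤ y) (hyx : y ≤ x) : y ∈ I :=
  hI.2.2.1 x hx y ⟨hy, hyx.trans (hI.1 hx).2⟩ hyx

lemma zero_mem (hI : IsIdealIn u (Set.Icc 0 u) I) : (0 : G) ∈ I := by
  obtain ⟨x, hx⟩ := hI.2.1
  exact hI.mem_of_le hx le_rfl (hI.1 hx).1

lemma inf_mem (hI : IsIdealIn u (Set.Icc 0 u) I) {x y : G} (hx : x ∈ I) (hy : 0 ≤ y) :
    x ⊓ y ∈ I :=
  hI.mem_of_le hx (le_inf (hI.1 hx).1 hy) inf_le_left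

lemma left_mem_of_oplus_mem (hI : IsIdealIn u (Set.Icc 0 u) I) {x y : G}
    (hxy : oplus u x y ∈ I) (hx : x ∈ Set.Icc 0 u) (hy : 0 ≤ y) : x ∈ I :=
  hI.mem_of_le hxy hx.1 (le_oplus_left hx.2 hy)

lemma right_mem_of_oplus_mem (hI : IsIdealIn u (Set.Icc 0 u) I) {x y : G}
    (hxy : oplus u x y ∈ I) (hx : 0 ≤ x) (hy : y ∈ Set.Icc 0 u) : y ∈ I :=
  hI.mem_of_le hxy hy.1 (le_oplus_right hx hy.2)

lemma inf_mem_inter (hI : IsIdealIn u (Set.Icc 0 u) I) (hJ : IsIdealIn u (Set.Icc 0 u) J)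
    {x y : G} (hx : x ∈ I) (hy : y ∈ J) : x ⊓ y ∈ I ∩ J :=
  ⟨hI.inf_mem hx (hJ.1 hy).1, inf_comm x y ▸ hJ.inf_mem hy (hI.1 hx).1⟩

lemma inter (hI : IsIdealIn u (Set.Icc 0 u) I) (hJ : IsIdealIn u (Set.Icc 0 u) J) :
    IsIdealIn u (Set.Icc 0 u) (I ∩ J) :=
  ⟨fun _ hx => hI.1 hx.1, ⟨0, hI.zero_mem, hJ.zero_mem⟩,
    fun x hx y hy hyx => ⟨hI.2.2.1 x hx.1 y hy hyx, hJ.2.2.1 x hx.2 y hy hyx⟩,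
    fun x hx y hy => ⟨hI.2.2.2 x hx.1 y hy.1, hJ.2.2.2 x hx.2 y hy.2⟩⟩

lemma inf_eq_zero_of_inter_eq (hI : IsIdealIn u (Set.Icc 0 u) I)
    (hJ : IsIdealIn u (Set.Icc 0 u) J) (h : I ∩ J = {0}) {a b : G} (ha : a ∈ I) (hb : b ∈ J) :
    a ⊓ b = 0 := by
  have hab := hI.inf_mem_inter hJ ha hb
  rwa [h] at hab

/-- Riesz decomposition: `y ≤ a ⊕ b` splits as `y = (y ∧ a) ⊕ (-(y ∧ a) + y)`. -/
lemma exists_eq_oplus_of_le_oplus (hI : IsIdealIn u (Set.Icc 0 u) I)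
    (hJ : IsIdealIn u (Set.Icc 0 u) J) {a b y : G} (ha : a ∈ I) (hb : b ∈ J)
    (hy : y ∈ Set.Icc 0 u) (hle : y ≤ oplus u a b) :
    ∃ a₁ ∈ I, ∃ b₁ ∈ J, oplus u a₁ b₁ = y := by
  have hrest : -(y ⊓ a) + y = 0 ⊔ (-a + y) := by rw [neg_inf, sup_add, neg_add_cancel]
  have hrest_le : -(y ⊓ a) + y ≤ b := by
    rw [hrest]
    refine sup_le (hJ.1 hb).1 ?_
    rw [neg_add_le_iff_le_add]
    exact hle.trans inf_le_left
  refine ⟨y ⊓ a, hI.mem_of_le ha (le_inf hy.1 (hI.1 ha).1) inf_le_right,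
    -(y ⊓ a) + y, hJ.mem_of_le hb (hrest ▸ le_sup_left) hrest_le, ?_⟩
  rw [oplus, add_neg_cancel_left, inf_eq_left.2 hy.2]

lemma setOplus_of_inf_eq_zero (hI : IsIdealIn u (Set.Icc 0 u) I)
    (hJ : IsIdealIn u (Set.Icc 0 u) J) (hIJ : ∀ a ∈ I, ∀ b ∈ J, a ⊓ b = 0) :
    IsIdealIn u (Set.Icc 0 u) (setOplus u I J) := by
  have hdown : ∀ x ∈ setOplus u I J, ∀ y ∈ Set.Icc 0 u, y ≤ x → y ∈ setOplus u I J := by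
    rintro _ ⟨a, ha, b, hb, rfl⟩ y hy hle
    obtain ⟨a₁, ha₁, b₁, hb₁, rfl⟩ := hI.exists_eq_oplus_of_le_oplus hJ ha hb hy hle
    exact ⟨a₁, ha₁, b₁, hb₁, rfl⟩
  refine ⟨setOplus_subset_Icc hI.1 hJ.1, ⟨_, 0, hI.zero_mem, 0, hJ.zero_mem, rfl⟩, hdown, ?_⟩
  rintro _ ⟨a, ha, b, hb, rfl⟩ _ ⟨a', ha', b', hb', rfl⟩
  refine ⟨oplus u a a', hI.2.2.2 a ha a' ha', oplus u b b', hJ.2.2.2 b hb b' hb', ?_⟩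
  exact oplus_oplus_oplus_comm (hI.1 ha).1 (hI.1 ha') (hJ.1 hb) (hJ.1 hb') (hIJ a' ha' b hb)

end IsIdealIn

namespace IsNormalIdealIn

variable {I J : Set G}

lemma exists_oplus_eq_oplus_left (hI : IsNormalIdealIn u (Set.Icc 0 u) I) {x i : G}
    (hx : x ∈ Set.Icc 0 u) (hi : i ∈ I) : ∃ j ∈ I, oplus u j x = oplus u x i :=
  (hI.2 x hx).subset (Set.mem_image_of_mem _ hi)

lemma exists_oplus_eq_oplus_right (hI : IsNormalIdealIn u (Set.Icc 0 u) I) {x i : G}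
    (hx : x ∈ Set.Icc 0 u) (hi : i ∈ I) : ∃ j ∈ I, oplus u x j = oplus u i x :=
  (hI.2 x hx).symm.subset (Set.mem_image_of_mem _ hi)

lemma of_exists_oplus_eq (hI : IsIdealIn u (Set.Icc 0 u) I)
    (hleft : ∀ x ∈ Set.Icc 0 u, ∀ i ∈ I, ∃ j ∈ I, oplus u j x = oplus u x i)
    (hright : ∀ x ∈ Set.Icc 0 u, ∀ i ∈ I, ∃ j ∈ I, oplus u x j = oplus u i x) :
    IsNormalIdealIn u (Set.Icc 0 u) I := by
  refine ⟨hI, fun x hx => Set.Subset.antisymm ?_ ?_⟩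
  · rintro _ ⟨i, hi, rfl⟩
    exact hleft x hx i hi
  · rintro _ ⟨i, hi, rfl⟩
    exact hright x hx i hi

/-- A common witness for `I` and `J` is the meet of the two, since `⊕` distributes over `∧`. -/
lemma inter (hI : IsNormalIdealIn u (Set.Icc 0 u) I) (hJ : IsNormalIdealIn u (Set.Icc 0 u) J) :
    IsNormalIdealIn u (Set.Icc 0 u) (I ∩ J) := by
  refine of_exists_oplus_eq (hI.1.inter hJ.1) (fun x hx i hi => ?_) (fun x hx i hi => ?_)
  · obtain ⟨j, hj, hjx⟩ := hI.exists_oplus_eq_oplus_left hx hi.1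
    obtain ⟨k, hk, hkx⟩ := hJ.exists_oplus_eq_oplus_left hx hi.2
    refine ⟨j ⊓ k, hI.1.inf_mem_inter hJ.1 hj hk, ?_⟩
    rw [inf_oplus, hjx, hkx, inf_idem]
  · obtain ⟨j, hj, hjx⟩ := hI.exists_oplus_eq_oplus_right hx hi.1
    obtain ⟨k, hk, hkx⟩ := hJ.exists_oplus_eq_oplus_right hx hi.2
    refine ⟨j ⊓ k, hI.1.inf_mem_inter hJ.1 hj hk, ?_⟩
    rw [oplus_inf, hjx, hkx, inf_idem]


lemma setOplus_of_inf_eq_zero (hI : IsNormalIdealIn u (Set.Icc 0 u) I)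
    (hJ : IsNormalIdealIn u (Set.Icc 0 u) J) (hIJ : ∀ a ∈ I, ∀ b ∈ J, a ⊓ b = 0) :
    IsNormalIdealIn u (Set.Icc 0 u) (setOplus u I J) := by
  refine of_exists_oplus_eq (hI.1.setOplus_of_inf_eq_zero hJ.1 hIJ) ?_ ?_
  · rintro x hx _ ⟨a, ha, b, hb, rfl⟩
    obtain ⟨a₁, ha₁, hxa⟩ := hI.exists_oplus_eq_oplus_left hx ha
    obtain ⟨b₁, hb₁, hxb⟩ := hJ.exists_oplus_eq_oplus_left hx hb
    refine ⟨oplus u a₁ b₁, ⟨a₁, ha₁, b₁, hb₁, rfl⟩, ?_⟩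
    have ha₁0 := (hI.1.1 ha₁).1
    rw [oplus_assoc _ ha₁0 hx.1, hxb, ← oplus_assoc _ ha₁0 (hJ.1.1 hb).1, hxa,
      oplus_assoc _ hx.1 (hJ.1.1 hb).1]
  · rintro x hx _ ⟨a, ha, b, hb, rfl⟩
    obtain ⟨a₁, ha₁, hax⟩ := hI.exists_oplus_eq_oplus_right hx ha
    obtain ⟨b₁, hb₁, hbx⟩ := hJ.exists_oplus_eq_oplus_right hx hb
    refine ⟨oplus u a₁ b₁, ⟨a₁, ha₁, b₁, hb₁, rfl⟩, ?_⟩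
    have hb₁0 := (hJ.1.1 hb₁).1
    rw [← oplus_assoc _ hx.1 hb₁0, hax, oplus_assoc _ (hI.1.1 ha).1 hb₁0, hbx,
      ← oplus_assoc _ (hI.1.1 ha).1 hx.1]

lemma normalGenIn_union_eq_setOplus (hI : IsNormalIdealIn u (Set.Icc 0 u) I)
    (hJ : IsNormalIdealIn u (Set.Icc 0 u) J) (hIJ : ∀ a ∈ I, ∀ b ∈ J, a ⊓ b = 0) :
    normalGenIn u (Set.Icc 0 u) (I ∪ J) = setOplus u I J := by
  refine Set.Subset.antisymm
    (Set.sInter_subset_of_mem ⟨hI.setOplus_of_inf_eq_zero hJ hIJ, ?_⟩) ?_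
  · rintro x (hx | hx)
    · exact ⟨x, hx, 0, hJ.1.zero_mem, oplus_zero (hI.1.1 hx).2⟩
    · exact ⟨0, hI.1.zero_mem, x, hx, zero_oplus (hJ.1.1 hx).2⟩
  · rintro _ ⟨a, ha, b, hb, rfl⟩ K ⟨hK, hIJK⟩
    exact hK.1.2.2.2 a (hIJK (Or.inl ha)) b (hIJK (Or.inr hb))

end IsNormalIdealIn

lemma isSummandIdealIn_iff {I : Set G} :
    IsSummandIdealIn u (Set.Icc 0 u) I ↔ IsNormalIdealIn u (Set.Icc 0 u) I ∧
      ∃ J, IsNormalIdealIn u (Set.Icc 0 u) J ∧ I ∩ J = {0} ∧ setOplus u I J = Set.Icc 0 u := by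
  refine and_congr_right fun hI => exists_congr fun J => and_congr_right fun hJ =>
    and_congr_right fun hIJ => ?_
  rw [hI.normalGenIn_union_eq_setOplus hJ fun a ha b hb =>
    hI.1.inf_eq_zero_of_inter_eq hJ.1 hIJ ha hb]

section Complement

variable {A A' B B' : Set G}

lemma inter_inter_setOplus_eq_singleton_zero (hA : IsIdealIn u (Set.Icc 0 u) A)
    (hA' : IsIdealIn u (Set.Icc 0 u) A') (hB : IsIdealIn u (Set.Icc 0 u) B)
    (hB' : IsIdealIn u (Set.Icc 0 u) B') (hAA' : A ∩ A' = {0}) (hBB' : B ∩ B' = {0}) :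
    (A ∩ B) ∩ setOplus u (A ∩ B') A' = {0} := by
  have h0u : (0 : G) ≤ u := (hA.1 hA.zero_mem).2
  refine Set.Subset.antisymm ?_ ?_
  · rintro _ ⟨⟨hxA, hxB⟩, c, ⟨hcA, hcB'⟩, a', ha', rfl⟩
    have hc : c ∈ B ∩ B' := ⟨hB.left_mem_of_oplus_mem hxB (hA.1 hcA) (hA'.1 ha').1, hcB'⟩
    have ha'_mem : a' ∈ A ∩ A' := ⟨hA.right_mem_of_oplus_mem hxA (hA.1 hcA).1 (hA'.1 ha'), ha'⟩
    rw [hBB', Set.mem_singleton_iff] at hc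
    rw [hAA', Set.mem_singleton_iff] at ha'_mem
    rw [hc, ha'_mem, Set.mem_singleton_iff]
    exact zero_oplus h0u
  · rintro _ rfl
    exact ⟨⟨hA.zero_mem, hB.zero_mem⟩, 0, ⟨hA.zero_mem, hB'.zero_mem⟩, 0, hA'.zero_mem,
      zero_oplus h0u⟩

lemma setOplus_inter_setOplus_eq_Icc (hA : IsIdealIn u (Set.Icc 0 u) A)
    (hA' : IsIdealIn u (Set.Icc 0 u) A') (hB : IsIdealIn u (Set.Icc 0 u) B)
    (hB' : IsIdealIn u (Set.Icc 0 u) B') (hAA' : setOplus u A A' = Set.Icc 0 u)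
    (hBB' : setOplus u B B' = Set.Icc 0 u) :
    setOplus u (A ∩ B) (setOplus u (A ∩ B') A') = Set.Icc 0 u := by
  refine Set.Subset.antisymm (setOplus_subset_Icc (fun _ hx => hA.1 hx.1)
    (setOplus_subset_Icc (fun _ hx => hA.1 hx.1) hA'.1)) fun x hx => ?_
  rw [← hAA'] at hx
  obtain ⟨a, haA, a', ha', rfl⟩ := hx
  have ha : a ∈ setOplus u B B' := hBB' ▸ hA.1 haA
  obtain ⟨b, hbB, b', hb'B', rfl⟩ := ha
  refine ⟨b, ⟨hA.left_mem_of_oplus_mem haA (hB.1 hbB) (hB'.1 hb'B').1, hbB⟩, oplus u b' a',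
    ⟨b', ⟨hA.right_mem_of_oplus_mem haA (hB.1 hbB).1 (hB'.1 hb'B'), hb'B'⟩, a', ha', rfl⟩, ?_⟩
  rw [oplus_assoc b' (hB.1 hbB).1 (hA'.1 ha').1]

end Complement

theorem stmt6_general (u : G) (A B : Set G)
    (hA : IsSummandIdealIn u (Set.Icc (0 : G) u) A)
    (hB : IsSummandIdealIn u (Set.Icc (0 : G) u) B) :
    IsSummandIdealIn u (Set.Icc (0 : G) u) (A ∩ B) := by
  obtain ⟨hAn, A', hA'n, hAA', hAA'_eq⟩ := isSummandIdealIn_iff.1 hA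
  obtain ⟨hBn, B', hB'n, hBB', hBB'_eq⟩ := isSummandIdealIn_iff.1 hB
  have hdisj : ∀ c ∈ A ∩ B', ∀ a' ∈ A', c ⊓ a' = 0 := fun c hc a' ha' =>
    hAn.1.inf_eq_zero_of_inter_eq hA'n.1 hAA' hc.1 ha'
  exact isSummandIdealIn_iff.2 ⟨hAn.inter hBn, setOplus u (A ∩ B') A',
    (hAn.inter hB'n).setOplus_of_inf_eq_zero hA'n hdisj,
    inter_inter_setOplus_eq_singleton_zero hAn.1 hA'n.1 hBn.1 hB'n.1 hAA' hBB',
    setOplus_inter_setOplus_eq_Icc hAn.1 hA'n.1 hBn.1 hB'n.1 hAA'_eq hBB'_eq⟩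

theorem stmt6 (u : G) (hu : IsStrongUnit u) (A B : Set G)
    (hA : IsSummandIdealIn u (Set.Icc (0 : G) u) A)
    (hB : IsSummandIdealIn u (Set.Icc (0 : G) u) B) :
    IsSummandIdealIn u (Set.Icc (0 : G) u) (A ∩ B) :=
  stmt6_general u A B hA hB
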